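/- arXiv:2411.15987 — 2 statements merged into one kernel-verified Lean document; each statement's English description precedes it below -/
import Mathlib

section
/- Let G be a group. A subset A ⊆ G is left piecewise syndetic if and only if there exists an ultrafilter p in the smallest two-sided ideal K(βG, •) with A ∈ p. Moreover, for such p, the set L_A = { x ∈ G : Ax⁻¹ ∈ p } is left syndetic. -/
/-- `A` is left syndetic: finitely many right translates `Ah⁻¹` cover `G`. -/
def leftSyndetic {G : Type*} [Group G] (A : Set G) : Prop :=
  ∃ H : Finset G, ∀ g : G, ∃ h ∈ H, g * h ∈ A

/-- `A` is left thick: for every finite `F ⊆ G` there is `x` with `xF ⊆ A`. -/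
def leftThick {G : Type*} [Group G] (A : Set G) : Prop :=
  ∀ F : Finset G, ∃ x : G, ∀ f ∈ F, x * f ∈ A

/-- `A` is left piecewise syndetic: `⋃_{h ∈ H} Ah⁻¹` is left thick for some finite `H`. -/
def leftPiecewiseSyndetic {G : Type*} [Group G] (A : Set G) : Prop :=
  ∃ H : Finset G, leftThick { g : G | ∃ h ∈ H, g * h ∈ A }

/-- The operation `p • q` on ultrafilters: `A ∈ p • q ↔ {x | Ax⁻¹ ∈ p} ∈ q`. -/
def umul {G : Type*} [Group G] (p q : Ultrafilter G) : Ultrafilter G :=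
  q.bind fun x => p.map (· * x)

/-- The smallest two-sided ideal `K(βG, •)`, as the intersection of all two-sided ideals. -/
def minimalIdeal (G : Type*) [Group G] : Set (Ultrafilter G) :=
  ⋂₀ { I : Set (Ultrafilter G) |
        I.Nonempty ∧ ∀ p ∈ I, ∀ q : Ultrafilter G, umul p q ∈ I ∧ umul q p ∈ I }


/-!
Work in the compact right-topological semigroup `(βG, •)`. A left thick set `B` contains a whole
principal right ideal `q • βG` in its closure, and every closed right ideal contains a minimal
right ideal `R`; the elements of minimal right ideals form `K(βG, •)`. So if `⋃_{h ∈ H} Ah⁻¹` is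
thick, it belongs to some `p ∈ K`, hence `Ah⁻¹ ∈ p` for one `h ∈ H`, i.e. `A ∈ p • h ∈ K`.
Conversely, `p ∈ K` satisfies `p ∈ p • q • βG` for every `q`. If `L_A` were not syndetic, its
complement would be thick, so `L_Aᶜ ∈ q • r` for all `r`; writing `p = p • q • r` gives
`L_A ∈ q • r`, a contradiction. Finally, finitely many translates of `L_A` covering `G` show that
`⋃_{h ∈ H} Ah⁻¹` is thick.
-/

section

open Set

variable {G : Type*} [Group G]

theorem mem_umul {A : Set G} {p q : Ultrafilter G} :
    A ∈ umul p q ↔ {x : G | {a : G | a * x ∈ A} ∈ p} ∈ q := by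
  show A ∈ Filter.bind (q : Filter G) (fun x => ↑(p.map (· * x))) ↔ _
  rw [Filter.mem_bind']
  rfl

theorem mem_umul_pure {A : Set G} {p : Ultrafilter G} {h : G} :
    A ∈ umul p (pure h) ↔ {a : G | a * h ∈ A} ∈ p :=
  mem_umul.trans Ultrafilter.mem_pure

theorem umul_assoc (p q r : Ultrafilter G) : umul (umul p q) r = umul p (umul q r) := by
  ext A
  simp only [mem_umul, mem_ofPred_eq, mul_assoc]

theorem continuous_umul_left (p : Ultrafilter G) : Continuous (umul p) := by
  rw [ultrafilterBasis_is_basis.continuous_iff]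
  rintro _ ⟨s, rfl⟩
  exact ultrafilter_isOpen_basic {x : G | {a : G | a * x ∈ s} ∈ p}

theorem isClosed_range_umul (p : Ultrafilter G) : IsClosed (range (umul p)) :=
  (isCompact_range (continuous_umul_left p)).isClosed

def IsRightIdeal (R : Set (Ultrafilter G)) : Prop :=
  ∀ p ∈ R, ∀ q, umul p q ∈ R

def IsMinimalRightIdeal (R : Set (Ultrafilter G)) : Prop :=
  Minimal (fun S : Set (Ultrafilter G) => S.Nonempty ∧ IsRightIdeal S) R

theorem isRightIdeal_range_umul (p : Ultrafilter G) : IsRightIdeal (range (umul p)) := by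
  rintro _ ⟨q, rfl⟩ r
  exact ⟨umul q r, (umul_assoc p q r).symm⟩

theorem IsRightIdeal.range_umul_subset {R : Set (Ultrafilter G)} (hR : IsRightIdeal R)
    {p : Ultrafilter G} (hp : p ∈ R) : range (umul p) ⊆ R := by
  rintro _ ⟨q, rfl⟩
  exact hR p hp q

theorem IsMinimalRightIdeal.range_umul_eq {R : Set (Ultrafilter G)} (hR : IsMinimalRightIdeal R)
    {p : Ultrafilter G} (hp : p ∈ R) : range (umul p) = R :=
  hR.eq_of_le ⟨⟨umul p p, p, rfl⟩, isRightIdeal_range_umul p⟩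
    (hR.prop.2.range_umul_subset hp)

theorem exists_isMinimalRightIdeal_subset_range_umul (q : Ultrafilter G) :
    ∃ R ⊆ range (umul q), IsMinimalRightIdeal R := by
  let S := {R : Set (Ultrafilter G) | R.Nonempty ∧ IsClosed R ∧ IsRightIdeal R}
  have hrange (p : Ultrafilter G) : range (umul p) ∈ S :=
    ⟨⟨umul p p, p, rfl⟩, isClosed_range_umul p, isRightIdeal_range_umul p⟩
  have hchain : ∀ c ⊆ S, IsChain (· ⊆ ·) c → c.Nonempty → ∃ lb ∈ S, ∀ s ∈ c, lb ⊆ s := by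
    intro c hcS hc hne
    have : Nonempty c := hne.to_subtype
    refine ⟨⋂₀ c, ⟨?_, isClosed_sInter fun s hs => (hcS hs).2.1, ?_⟩,
      fun s hs => sInter_subset_of_mem hs⟩
    · have hdir : DirectedOn (· ⊇ ·) c := fun s hs t ht => (hc.total hs ht).elim
        (fun h => ⟨s, hs, subset_rfl, h⟩) fun h => ⟨t, ht, h, subset_rfl⟩
      exact IsCompact.nonempty_sInter_of_directed_nonempty_isCompact_isClosed hdir
        (fun s hs => (hcS hs).1) (fun s hs => (hcS hs).2.1.isCompact) (fun s hs => (hcS hs).2.1)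
    · exact fun p hp r s hs => (hcS hs).2.2 p (hp s hs) r
  obtain ⟨R, hRq, hR⟩ := zorn_superset_nonempty S hchain _ (hrange q)
  refine ⟨R, hRq, ⟨hR.prop.1, hR.prop.2.2⟩, fun R' ⟨⟨p, hp⟩, hR'⟩ hR'R => ?_⟩
  -- `R'` contains the closed right ideal `p • βG`, which by minimality among closed ones is `R`.
  have hpR' := hR'.range_umul_subset hp
  exact (hR.le_of_le (hrange p) (hpR'.trans hR'R)).trans hpR'

/-- `p ∈ p • q • βG` for every `q`; equivalently, `p • βG` is a minimal right ideal. -/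
def GeneratesMinimalRightIdeal (p : Ultrafilter G) : Prop :=
  ∀ q, ∃ r, umul p (umul q r) = p

theorem IsMinimalRightIdeal.generatesMinimalRightIdeal {R : Set (Ultrafilter G)}
    (hR : IsMinimalRightIdeal R) {p : Ultrafilter G} (hp : p ∈ R) :
    GeneratesMinimalRightIdeal p := by
  intro q
  obtain ⟨r, hr⟩ : p ∈ range (umul (umul p q)) := (hR.range_umul_eq (hR.prop.2 p hp q)).symm ▸ hp
  exact ⟨r, (umul_assoc p q r).symm.trans hr⟩

theorem IsMinimalRightIdeal.subset_minimalIdeal {R : Set (Ultrafilter G)}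
    (hR : IsMinimalRightIdeal R) : R ⊆ minimalIdeal G := by
  refine fun p hp => mem_sInter.2 fun I ⟨⟨i, hi⟩, hI⟩ => ?_
  have hpi : umul p i ∈ I := (hI i hi p).2
  have hRI : R ⊆ I := by
    rw [← hR.range_umul_eq (hR.prop.2 p hp i)]
    rintro _ ⟨s, rfl⟩
    exact (hI _ hpi s).1
  exact hRI hp

theorem minimalIdeal_subset_generatesMinimalRightIdeal :
    minimalIdeal G ⊆ {p | GeneratesMinimalRightIdeal p} := by
  -- These `p` form a nonempty two-sided ideal.
  refine sInter_subset_of_mem ⟨?_, fun p hp s => ⟨fun q => ?_, fun q => ?_⟩⟩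
  · obtain ⟨R, -, hR⟩ := exists_isMinimalRightIdeal_subset_range_umul (pure 1 : Ultrafilter G)
    obtain ⟨p, hp⟩ := hR.prop.1
    exact ⟨p, hR.generatesMinimalRightIdeal hp⟩
  · obtain ⟨r, hr⟩ := hp (umul s q)
    refine ⟨umul r s, ?_⟩
    calc umul (umul p s) (umul q (umul r s)) = umul (umul p (umul (umul s q) r)) s := by
          simp only [umul_assoc]
      _ = umul p s := by rw [hr]
  · obtain ⟨r, hr⟩ := hp q
    exact ⟨r, by rw [umul_assoc, hr]⟩

theorem exists_ultrafilter_of_leftThick {B : Set G} (hB : leftThick B) :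
    ∃ q : Ultrafilter G, ∀ r, B ∈ umul q r := by
  classical
  choose x hx using hB
  -- Push forward an ultrafilter refining `atTop` on finite subsets along `F ↦ x F`.
  refine ⟨(Ultrafilter.of (Filter.atTop : Filter (Finset G))).map x, fun r => ?_⟩
  refine mem_umul.2 (Filter.univ_mem' fun g => Ultrafilter.mem_map.2 (Ultrafilter.of_le _ ?_))
  exact Filter.mem_atTop_sets.2 ⟨{g}, fun F hF => hx F g (hF (Finset.mem_singleton_self g))⟩

theorem leftThick_compl_of_not_leftSyndetic {A : Set G} (hA : ¬ leftSyndetic A) :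
    leftThick Aᶜ := by
  simpa [leftSyndetic, leftThick] using hA

theorem GeneratesMinimalRightIdeal.leftSyndetic {A : Set G} {p : Ultrafilter G}
    (hp : GeneratesMinimalRightIdeal p) (hA : A ∈ p) :
    leftSyndetic {x : G | {a : G | a * x ∈ A} ∈ p} := by
  by_contra hL
  obtain ⟨q, hq⟩ := exists_ultrafilter_of_leftThick (leftThick_compl_of_not_leftSyndetic hL)
  obtain ⟨r, hr⟩ := hp q
  rw [← hr, mem_umul] at hA
  exact Ultrafilter.compl_mem_iff_notMem.1 (hq r) hA

theorem leftPiecewiseSyndetic_of_leftSyndetic {A : Set G} {p : Ultrafilter G}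
    (hL : leftSyndetic {x : G | {a : G | a * x ∈ A} ∈ p}) : leftPiecewiseSyndetic A := by
  obtain ⟨H, hH⟩ := hL
  choose h hhH hhL using hH
  refine ⟨H, fun F => ?_⟩
  obtain ⟨a, ha⟩ := Ultrafilter.nonempty_of_mem
    ((Filter.biInter_finset_mem F).2 fun f _ => hhL f)
  exact ⟨a, fun f hf => ⟨h f, hhH f, by simpa [mul_assoc] using mem_iInter₂.1 ha f hf⟩⟩

theorem exists_mem_minimalIdeal_of_leftPiecewiseSyndetic {A : Set G}
    (hA : leftPiecewiseSyndetic A) : ∃ p ∈ minimalIdeal G, A ∈ p := by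
  obtain ⟨H, hH⟩ := hA
  obtain ⟨q, hq⟩ := exists_ultrafilter_of_leftThick hH
  obtain ⟨R, hRq, hR⟩ := exists_isMinimalRightIdeal_subset_range_umul q
  obtain ⟨p, hp⟩ := hR.prop.1
  obtain ⟨r, rfl⟩ := hRq hp
  have hB : (⋃ h ∈ (H : Set G), {a : G | a * h ∈ A}) ∈ umul q r :=
    Filter.mem_of_superset (hq r) fun a ⟨h, hh, ha⟩ => mem_biUnion hh ha
  obtain ⟨h, -, hh⟩ := (Ultrafilter.finite_biUnion_mem_iff H.finite_toSet).1 hB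
  exact ⟨umul (umul q r) (pure h), hR.subset_minimalIdeal (hR.prop.2 _ hp _), mem_umul_pure.2 hh⟩

end

/-- `A` is left piecewise syndetic iff some `p ∈ K(βG, •)` contains `A`; and for such `p`
the return set `L_A = {x : Ax⁻¹ ∈ p}` is left syndetic. -/
theorem stmt12 {G : Type*} [Group G] (A : Set G) :
    (leftPiecewiseSyndetic A ↔ ∃ p ∈ minimalIdeal G, A ∈ p) ∧
      (∀ p ∈ minimalIdeal G, A ∈ p →
        leftSyndetic { x : G | { a : G | a * x ∈ A } ∈ p }) := by
  have hL : ∀ p ∈ minimalIdeal G, A ∈ p → leftSyndetic {x : G | {a : G | a * x ∈ A} ∈ p} :=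
    fun p hp hA => (minimalIdeal_subset_generatesMinimalRightIdeal hp).leftSyndetic hA
  refine ⟨⟨exists_mem_minimalIdeal_of_leftPiecewiseSyndetic, ?_⟩, hL⟩
  rintro ⟨p, hp, hA⟩
  exact leftPiecewiseSyndetic_of_leftSyndetic (hL p hp hA)
end

section
/- Let G be a countable amenable group with identity e and suppose E ⊆ G × G has positive right upper density with respect to a right Følner sequence Φ on G × G. Then the set { g ∈ G : d̄_Φ(E ∩ E·(g⁻¹, e)) > 0 } is both right and left IP*, where E·(g⁻¹,e) = { (a g⁻¹, b) : (a,b) ∈ E }. -/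
open scoped Classical

/-- `Φ` is a right Følner sequence: finite nonempty sets with `|Φₙ ∩ Φₙg|/|Φₙ| → 1`. -/
def rightFolner {G : Type*} [Group G] (Φ : ℕ → Finset G) : Prop :=
  (∀ n, (Φ n).Nonempty) ∧ ∀ g : G,
    Filter.Tendsto (fun n => (((Φ n) ∩ (Φ n).image (· * g)).card : ℝ) / ((Φ n).card : ℝ))
      Filter.atTop (nhds 1)

/-- The right upper density of `E` along `Φ`: `limsup |E ∩ Φₙ|/|Φₙ|`. -/
noncomputable def upperDensity {G : Type*} [Group G] (Φ : ℕ → Finset G) (E : Set G) : ℝ :=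
  Filter.atTop.limsup fun n => (((Φ n).filter (· ∈ E)).card : ℝ) / ((Φ n).card : ℝ)

/-- The product of `x_n` over `F` with indices taken in decreasing order. -/
def prodDec {G : Type*} [Group G] (F : Finset ℕ) (x : ℕ → G) : G :=
  ((F.sort (· ≤ ·)).reverse.map x).prod

/-- The product of `x_n` over `F` with indices taken in increasing order. -/
def prodInc {G : Type*} [Group G] (F : Finset ℕ) (x : ℕ → G) : G :=
  ((F.sort (· ≤ ·)).map x).prod

/-- The left finite product set of a sequence `(x_n)` in `G`. -/
def FPL {G : Type*} [Group G] (x : ℕ → G) : Set G :=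
  { g | ∃ F : Finset ℕ, F.Nonempty ∧ g = prodDec F x }

/-- The right finite product set of a sequence `(x_n)` in `G`. -/
def FPR {G : Type*} [Group G] (x : ℕ → G) : Set G :=
  { g | ∃ F : Finset ℕ, F.Nonempty ∧ g = prodInc F x }

/-- `X` is left IP*: it meets every `FP_L(x_n)`. -/
def leftIPStar {G : Type*} [Group G] (X : Set G) : Prop :=
  ∀ x : ℕ → G, (X ∩ FPL x).Nonempty

/-- `X` is right IP*: it meets every `FP_R(x_n)`. -/
def rightIPStar {G : Type*} [Group G] (X : Set G) : Prop :=
  ∀ x : ℕ → G, (X ∩ FPR x).Nonempty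

/-!
Upper density along a right Følner sequence is invariant under right translation, and at each
time `n` the proportion of `Φ n` lying in a translate `E t⁻¹` differs from that of `E` by the
Følner defect of `t`. Given `t₀, t₁, …` and `N` with `N δ > 4`, where `δ = d̄(E)`, there are
infinitely many `n` at which each of `E t₀⁻¹, …, E t_{N-1}⁻¹` fills at least `δ/2` of `Φ n`, so their
proportions sum to more than `2`. The Bonferroni inequality `∑ 1_{Aᵢ} ≤ 1 + ∑_{i<j} 1_{Aᵢ ∩ Aⱼ}`
then forces a pair `i < j` with proportion above `1/N²` in their intersection, and by pigeonhole a
single pair does so infinitely often; translating back by `tᵢ`, `E ∩ E (tᵢ⁻¹ tⱼ)⁻¹` has positive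
upper density. With `tᵢ = (x₀ ⋯ x_{i-1}, e)`, `tᵢ⁻¹ tⱼ = (x_i ⋯ x_{j-1}, e)` lies over `FP_R(x)`;
with `tᵢ = ((x_{i-1} ⋯ x₀)⁻¹, e)`, `tⱼ⁻¹ tᵢ = (x_{j-1} ⋯ x_i, e)` lies over `FP_L(x)`.
-/

open Filter Finset Topology

section Density

variable {α : Type*} {Φ : ℕ → Finset α}

noncomputable def densityAt (Φ : ℕ → Finset α) (S : Set α) (n : ℕ) : ℝ :=
  (#((Φ n).filter (· ∈ S)) : ℝ) / #(Φ n)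

lemma densityAt_nonneg (S : Set α) (n : ℕ) : 0 ≤ densityAt Φ S n := by
  unfold densityAt; positivity

lemma densityAt_le_one (S : Set α) (n : ℕ) : densityAt Φ S n ≤ 1 :=
  div_le_one_of_le₀ (mod_cast card_filter_le _ _) (Nat.cast_nonneg _)

lemma isBoundedUnder_le_densityAt (S : Set α) :
    IsBoundedUnder (· ≤ ·) atTop (densityAt Φ S) :=
  isBoundedUnder_of ⟨1, densityAt_le_one S⟩

lemma isBoundedUnder_ge_densityAt (S : Set α) :
    IsBoundedUnder (· ≥ ·) atTop (densityAt Φ S) :=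
  isBoundedUnder_of ⟨0, densityAt_nonneg S⟩

lemma isCoboundedUnder_le_densityAt (S : Set α) :
    IsCoboundedUnder (· ≤ ·) atTop (densityAt Φ S) :=
  (isBoundedUnder_ge_densityAt S).isCoboundedUnder_le

end Density

section UpperDensity

variable {H : Type*} [Group H] {Φ : ℕ → Finset H}

lemma frequently_lt_densityAt {S : Set H} {c : ℝ} (hc : c < upperDensity Φ S) :
    ∃ᶠ n in atTop, c < densityAt Φ S n :=
  frequently_lt_of_lt_limsup (isCoboundedUnder_le_densityAt S) hc

lemma le_upperDensity_of_frequently {S : Set H} {c : ℝ}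
    (h : ∃ᶠ n in atTop, c ≤ densityAt Φ S n) : c ≤ upperDensity Φ S :=
  le_limsup_of_frequently_le h (isBoundedUnder_le_densityAt S)

lemma upperDensity_le_of_le_add {S T : Set H} {e : ℕ → ℝ} (he : Tendsto e atTop (𝓝 0))
    (h : ∀ n, densityAt Φ S n ≤ densityAt Φ T n + e n) :
    upperDensity Φ S ≤ upperDensity Φ T := by
  have he_le : IsBoundedUnder (· ≤ ·) atTop e := he.isBoundedUnder_le
  calc limsup (densityAt Φ S) atTop ≤ limsup (densityAt Φ T + e) atTop :=
        limsup_le_limsup (.of_forall h) (isCoboundedUnder_le_densityAt S)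
          (isBoundedUnder_le_add (isBoundedUnder_le_densityAt T) he_le)
    _ ≤ limsup (densityAt Φ T) atTop + limsup e atTop :=
        limsup_add_le (isBoundedUnder_ge_densityAt T) (isBoundedUnder_le_densityAt T)
          he.isBoundedUnder_ge.isCoboundedUnder_le he_le
    _ = limsup (densityAt Φ T) atTop := by rw [he.limsup_eq, add_zero]

end UpperDensity

section Folner

variable {H : Type*} [Group H] {Φ : ℕ → Finset H}

noncomputable def folnerDefect (Φ : ℕ → Finset H) (t : H) (n : ℕ) : ℝ :=
  1 - (#(Φ n ∩ (Φ n).image (· * t)) : ℝ) / #(Φ n)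

lemma rightFolner.tendsto_folnerDefect (hΦ : rightFolner Φ) (t : H) :
    Tendsto (folnerDefect Φ t) atTop (𝓝 0) := by
  have h := (hΦ.2 t).const_sub 1
  rwa [sub_self] at h

lemma card_filter_le_card_filter_add_card_sub_card_inter {α : Type*}
    {A B : Finset α} (hAB : #B = #A) (p : α → Prop) [DecidablePred p] :
    (#(B.filter p) : ℝ) ≤ #(A.filter p) + (#A - #(A ∩ B)) := by
  have hsub : B.filter p \ A.filter p ⊆ B \ A := fun z hz => by
    rw [Finset.mem_sdiff, mem_filter, mem_filter] at hz
    exact Finset.mem_sdiff.2 ⟨hz.1.1, fun h => hz.2 ⟨h, hz.1.2⟩⟩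
  have h1 := (card_le_card_sdiff_add_card (s := B.filter p) (t := A.filter p)).trans
    (Nat.add_le_add_right (card_le_card hsub) _)
  have h2 := card_sdiff_add_card_inter B A
  rw [inter_comm, hAB] at h2
  have h1' : (#(B.filter p) : ℝ) ≤ #(B \ A) + #(A.filter p) := by exact_mod_cast h1
  have h2' : (#(B \ A) : ℝ) + #(A ∩ B) = #A := by exact_mod_cast h2
  linarith

lemma abs_densityAt_preimage_mul_right_sub_le (Φ : ℕ → Finset H) (t : H) (S : Set H) (n : ℕ) :
    |densityAt Φ {z | z * t ∈ S} n - densityAt Φ S n| ≤ folnerDefect Φ t n := by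
  set A := Φ n
  set B := A.image (· * t)
  rcases A.eq_empty_or_nonempty with hA | hA
  · simp [densityAt, folnerDefect, A, hA]
  have hBA : #B = #A := card_image_of_injective _ (mul_left_injective t)
  have hshift : #(A.filter (· ∈ {z | z * t ∈ S})) = #(B.filter (· ∈ S)) := by
    rw [filter_image]
    exact (card_image_of_injective _ (mul_left_injective t)).symm
  have hApos : (0 : ℝ) < #A := by exact_mod_cast hA.card_pos
  have hdefect : folnerDefect Φ t n = (#A - #(A ∩ B)) / #A := by
    rw [folnerDefect, sub_div, div_self hApos.ne']
  rw [densityAt, densityAt, hshift, hdefect, ← sub_div, abs_div, abs_of_pos hApos,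
    div_le_div_iff_of_pos_right hApos, abs_sub_le_iff]
  have h1 := card_filter_le_card_filter_add_card_sub_card_inter hBA (· ∈ S)
  have h2 := card_filter_le_card_filter_add_card_sub_card_inter hBA.symm (· ∈ S)
  rw [hBA, inter_comm] at h2
  constructor <;> linarith

lemma upperDensity_preimage_mul_right (hΦ : rightFolner Φ) (t : H) (S : Set H) :
    upperDensity Φ {z | z * t ∈ S} = upperDensity Φ S := by
  have h := abs_densityAt_preimage_mul_right_sub_le Φ t S
  exact le_antisymm
    (upperDensity_le_of_le_add (hΦ.tendsto_folnerDefect t) fun n => by linarith [abs_le.1 (h n)])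
    (upperDensity_le_of_le_add (hΦ.tendsto_folnerDefect t) fun n => by linarith [abs_le.1 (h n)])

lemma upperDensity_inter_preimage_mul_right (hΦ : rightFolner Φ) (a b : H) (E : Set H) :
    upperDensity Φ (E ∩ {z | z * (a⁻¹ * b) ∈ E}) =
      upperDensity Φ ({z | z * a ∈ E} ∩ {z | z * b ∈ E}) := by
  rw [← upperDensity_preimage_mul_right hΦ a]
  congr 1
  ext z
  simp [mul_assoc]

end Folner

section Bonferroni

variable {ι α : Type*} [LinearOrder ι]

def ltPairs (I : Finset ι) : Finset (ι × ι) :=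
  (I ×ˢ I).filter fun p => p.1 < p.2

lemma card_le_one_add_card_ltPairs (I : Finset ι) : #I ≤ 1 + #(ltPairs I) := by
  rcases I.eq_empty_or_nonempty with rfl | hI
  · simp
  have hmaps : ∀ j ∈ I.erase (I.min' hI), (I.min' hI, j) ∈ ltPairs I := fun j hj => by
    rw [mem_erase] at hj
    simp only [ltPairs, mem_filter, mem_product]
    exact ⟨⟨I.min'_mem hI, hj.2⟩, lt_of_le_of_ne (I.min'_le j hj.2) (Ne.symm hj.1)⟩
  have h := card_le_card_of_injOn _ hmaps fun a _ b _ hab => (Prod.mk.inj hab).2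
  rw [card_erase_of_mem (I.min'_mem hI)] at h
  omega

lemma sum_card_filter_le_card_add_sum_card_filter_inter (A : Finset α) (I : Finset ι)
    (S : ι → Set α) :
    ∑ i ∈ I, #(A.filter (· ∈ S i)) ≤
      #A + ∑ p ∈ ltPairs I, #(A.filter (· ∈ S p.1 ∩ S p.2)) := by
  have hpairs : ∀ z, (ltPairs I).filter (fun p => z ∈ S p.1 ∩ S p.2) =
      ltPairs (I.filter fun i => z ∈ S i) := fun z => by
    ext p
    simp only [ltPairs, mem_filter, mem_product, Set.mem_inter_iff]
    tauto
  simp only [card_filter]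
  rw [sum_comm, sum_comm (s := ltPairs I), card_eq_sum_ones A, ← sum_add_distrib]
  refine sum_le_sum fun z _ => ?_
  rw [← card_filter, ← card_filter, hpairs]
  exact card_le_one_add_card_ltPairs _

lemma sum_densityAt_le_one_add_sum_densityAt_inter (Φ : ℕ → Finset α) (I : Finset ι)
    (S : ι → Set α) (n : ℕ) :
    ∑ i ∈ I, densityAt Φ (S i) n ≤ 1 + ∑ p ∈ ltPairs I, densityAt Φ (S p.1 ∩ S p.2) n := by
  have h : (∑ i ∈ I, #((Φ n).filter (· ∈ S i)) : ℝ) ≤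
      #(Φ n) + ∑ p ∈ ltPairs I, #((Φ n).filter (· ∈ S p.1 ∩ S p.2)) := by
    exact_mod_cast sum_card_filter_le_card_add_sum_card_filter_inter (Φ n) I S
  calc ∑ i ∈ I, densityAt Φ (S i) n
      = (∑ i ∈ I, #((Φ n).filter (· ∈ S i)) : ℝ) / #(Φ n) := by simp only [densityAt, sum_div]
    _ ≤ (#(Φ n) + ∑ p ∈ ltPairs I, #((Φ n).filter (· ∈ S p.1 ∩ S p.2)) : ℝ) / #(Φ n) :=
        div_le_div_of_nonneg_right h (Nat.cast_nonneg _)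
    _ = #(Φ n) / #(Φ n) + ∑ p ∈ ltPairs I, densityAt Φ (S p.1 ∩ S p.2) n := by
        simp only [densityAt, add_div, Nat.cast_sum, sum_div]
        -- `h` decides membership in `S p.1 ∩ S p.2` by `Set.decidableInter`, `densityAt` classically
        congr!
    _ ≤ 1 + ∑ p ∈ ltPairs I, densityAt Φ (S p.1 ∩ S p.2) n :=
        add_le_add_left (div_self_le_one _) _

lemma exists_mem_ltPairs_lt_densityAt_inter {Φ : ℕ → Finset α} {I : Finset ι}
    {S : ι → Set α} {c : ℝ} {n : ℕ} (hc : 2 < #I * c) (h : ∀ i ∈ I, c ≤ densityAt Φ (S i) n) :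
    ∃ p ∈ ltPairs I, 1 / #I ^ 2 < densityAt Φ (S p.1 ∩ S p.2) n := by
  have hcard : (#(ltPairs I) : ℝ) ≤ #I ^ 2 := by
    rw [sq]
    exact_mod_cast (card_filter_le _ _).trans (card_product I I).le
  have hsum : #I * c ≤ ∑ i ∈ I, densityAt Φ (S i) n := by
    simpa using sum_le_sum h
  refine exists_lt_of_sum_lt ?_
  calc ∑ _p ∈ ltPairs I, (1 / #I ^ 2 : ℝ) = #(ltPairs I) / #I ^ 2 := by
        rw [sum_const, nsmul_eq_mul, mul_one_div]
    _ ≤ 1 := div_le_one_of_le₀ hcard (by positivity)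
    _ < ∑ p ∈ ltPairs I, densityAt Φ (S p.1 ∩ S p.2) n := by
        linarith [sum_densityAt_le_one_add_sum_densityAt_inter Φ I S n]

end Bonferroni

section Recurrence

variable {H : Type*} [Group H] {Φ : ℕ → Finset H}

lemma exists_lt_pos_upperDensity_preimage_inter (hΦ : rightFolner Φ) {E : Set H}
    (hE : 0 < upperDensity Φ E) (t : ℕ → H) :
    ∃ i j, i < j ∧ 0 < upperDensity Φ ({z | z * t i ∈ E} ∩ {z | z * t j ∈ E}) := by
  set δ := upperDensity Φ E
  obtain ⟨N, hN⟩ := exists_nat_gt (4 / δ)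
  have hNδ : 2 < #(range N) * (δ / 2) := by
    rw [card_range]
    linarith [(div_lt_iff₀ hE).1 hN]
  have hdefect : ∀ᶠ n in atTop, ∀ i ∈ range N, folnerDefect Φ (t i) n < δ / 4 :=
    (eventually_all_finset _).2 fun i _ =>
      (hΦ.tendsto_folnerDefect (t i)).eventually_lt_const (by positivity)
  have htranslates : ∃ᶠ n in atTop, ∀ i ∈ range N, δ / 2 ≤ densityAt Φ {z | z * t i ∈ E} n := by
    refine ((frequently_lt_densityAt (by linarith : 3 * δ / 4 < δ)).and_eventually hdefect).mono ?_
    rintro n ⟨hn, hdef⟩ i hi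
    linarith [hdef i hi, (abs_le.1 (abs_densityAt_preimage_mul_right_sub_le Φ (t i) E n)).1]
  obtain ⟨p, hp, hfreq⟩ := (frequently_exists_finset _).1
    (htranslates.mono fun n hn => exists_mem_ltPairs_lt_densityAt_inter hNδ hn)
  refine ⟨p.1, p.2, (mem_filter.1 hp).2, ?_⟩
  have hN0 : (0 : ℝ) < 1 / #(range N) ^ 2 := by
    rw [card_range]
    have : 0 < N := by exact_mod_cast (div_pos (by norm_num) hE).trans hN
    positivity
  exact hN0.trans_le (le_upperDensity_of_frequently (hfreq.mono fun _ => le_of_lt))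

lemma exists_lt_pos_upperDensity_inter_preimage_mul_right (hΦ : rightFolner Φ) {E : Set H}
    (hE : 0 < upperDensity Φ E) (t : ℕ → H) :
    ∃ i j, i < j ∧ 0 < upperDensity Φ (E ∩ {z | z * ((t i)⁻¹ * t j) ∈ E}) ∧
      0 < upperDensity Φ (E ∩ {z | z * ((t j)⁻¹ * t i) ∈ E}) := by
  obtain ⟨i, j, hij, hpos⟩ := exists_lt_pos_upperDensity_preimage_inter hΦ hE t
  refine ⟨i, j, hij, ?_, ?_⟩
  · rwa [upperDensity_inter_preimage_mul_right hΦ]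
  · rwa [upperDensity_inter_preimage_mul_right hΦ, Set.inter_comm]

end Recurrence

section FiniteProducts

variable {G : Type*} [Group G]

lemma sort_union_of_forall_lt {β : Type*} [LinearOrder β] {s t : Finset β}
    (h : ∀ a ∈ s, ∀ b ∈ t, a < b) :
    (s ∪ t).sort (· ≤ ·) = s.sort (· ≤ ·) ++ t.sort (· ≤ ·) := by
  have hnodup : (s.sort (· ≤ ·) ++ t.sort (· ≤ ·)).Nodup :=
    List.nodup_append.2 ⟨sort_nodup _ _, sort_nodup _ _,
      fun a ha b hb => (h a ((mem_sort _).1 ha) b ((mem_sort _).1 hb)).ne⟩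
  have hsorted := (List.toFinset_sort (· ≤ ·) hnodup).2 <| List.pairwise_append.2
    ⟨pairwise_sort _ _, pairwise_sort _ _,
      fun a ha b hb => (h a ((mem_sort _).1 ha) b ((mem_sort _).1 hb)).le⟩
  rwa [List.toFinset_append, sort_toFinset, sort_toFinset] at hsorted

lemma prodInc_union {s t : Finset ℕ} (h : ∀ a ∈ s, ∀ b ∈ t, a < b) (x : ℕ → G) :
    prodInc (s ∪ t) x = prodInc s x * prodInc t x := by
  rw [prodInc, sort_union_of_forall_lt h, List.map_append, List.prod_append, prodInc, prodInc]

lemma prodDec_union {s t : Finset ℕ} (h : ∀ a ∈ s, ∀ b ∈ t, a < b) (x : ℕ → G) :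
    prodDec (s ∪ t) x = prodDec t x * prodDec s x := by
  rw [prodDec, sort_union_of_forall_lt h, List.reverse_append, List.map_append, List.prod_append,
    prodDec, prodDec]

lemma range_union_Ico {i j : ℕ} (hij : i ≤ j) : range i ∪ Ico i j = range j := by
  rw [range_eq_Ico, range_eq_Ico, Ico_union_Ico_eq_Ico (Nat.zero_le i) hij]

lemma forall_mem_range_lt_mem_Ico (i j : ℕ) : ∀ a ∈ range i, ∀ b ∈ Ico i j, a < b :=
  fun _ ha _ hb => (mem_range.1 ha).trans_le (mem_Ico.1 hb).1

lemma rightIPStar_of_forall_exists_inv_mul {X : Set G}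
    (h : ∀ s : ℕ → G, ∃ i j, i < j ∧ (s i)⁻¹ * s j ∈ X) : rightIPStar X := by
  intro x
  obtain ⟨i, j, hij, hX⟩ := h fun n => prodInc (range n) x
  refine ⟨_, hX, Ico i j, nonempty_Ico.2 hij, ?_⟩
  rw [← range_union_Ico hij.le, prodInc_union (forall_mem_range_lt_mem_Ico i j),
    inv_mul_cancel_left]

lemma leftIPStar_of_forall_exists_mul_inv {X : Set G}
    (h : ∀ s : ℕ → G, ∃ i j, i < j ∧ s j * (s i)⁻¹ ∈ X) : leftIPStar X := by
  intro x
  obtain ⟨i, j, hij, hX⟩ := h fun n => prodDec (range n) x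
  refine ⟨_, hX, Ico i j, nonempty_Ico.2 hij, ?_⟩
  rw [← range_union_Ico hij.le, prodDec_union (forall_mem_range_lt_mem_Ico i j),
    mul_inv_cancel_right]

end FiniteProducts

theorem stmt16_general {G : Type*} [Group G]
    (Φ : ℕ → Finset (G × G)) (hΦ : rightFolner Φ) (E : Set (G × G))
    (hE : 0 < upperDensity Φ E) :
    rightIPStar { g : G | 0 < upperDensity Φ (E ∩ { z : G × G | (z.1 * g, z.2) ∈ E }) } ∧
      leftIPStar { g : G | 0 < upperDensity Φ (E ∩ { z : G × G | (z.1 * g, z.2) ∈ E }) } := by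
  constructor
  · refine rightIPStar_of_forall_exists_inv_mul fun s => ?_
    obtain ⟨i, j, hij, hpos, -⟩ :=
      exists_lt_pos_upperDensity_inter_preimage_mul_right hΦ hE fun n => (s n, 1)
    exact ⟨i, j, hij, by simpa [Prod.mul_def] using hpos⟩
  · refine leftIPStar_of_forall_exists_mul_inv fun s => ?_
    obtain ⟨i, j, hij, -, hpos⟩ :=
      exists_lt_pos_upperDensity_inter_preimage_mul_right hΦ hE fun n => ((s n)⁻¹, 1)
    exact ⟨i, j, hij, by simpa [Prod.mul_def] using hpos⟩

/-- If `E ⊆ G × G` has positive right upper density with respect to a right Følner sequence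
`Φ` on `G × G`, then `{g : d̄_Φ(E ∩ E·(g⁻¹, e)) > 0}` is both right and left IP*. -/
theorem stmt16 {G : Type*} [Group G] [Countable G]
    (Φ : ℕ → Finset (G × G)) (hΦ : rightFolner Φ) (E : Set (G × G))
    (hE : 0 < upperDensity Φ E) :
    rightIPStar { g : G | 0 < upperDensity Φ (E ∩ { z : G × G | (z.1 * g, z.2) ∈ E }) } ∧
      leftIPStar { g : G | 0 < upperDensity Φ (E ∩ { z : G × G | (z.1 * g, z.2) ∈ E }) } :=
  stmt16_general Φ hΦ E hE
end
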